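/- For every real T > 0 and every t ∈ [0, T], one has cosh(t)·sinh(T) − sinh(t)·(cosh(T) − 1) > 0; consequently, for q̃ ≠ 0, the optimal control u*(t) = q̃·(sinh(t)·sinh(T) − cosh(t)·(cosh(T) − 1))/(2·(cosh(T) − 1) − T·sinh(T)) of the double-integrator problem is strictly monotone on [0, T]. -/

import Mathlib

/-!
The derivative of the bracket in `u*` is `cosh t sinh T - sinh t (cosh T - 1) = sinh t + sinh (T - t)`,
which is positive on `[0, T]`. Monotonicity is seen even more directly from
`sinh t sinh T - cosh t (cosh T - 1) = cosh t - cosh (T - t)`, a difference of a strictly increasing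
and a strictly decreasing function of `t ∈ [0, T]`. The denominator is nonzero: with `x = T / 2` it equals
`4 sinh x (sinh x - x cosh x)`, and `sinh x < x cosh x` for `x > 0` by the mean value theorem,
since `cosh` is strictly increasing on `[0, ∞)`.
-/

open Real Set

lemma StrictMonoOn.const_mul_or_strictAntiOn {α β : Type*} [Preorder α] [Ring β] [LinearOrder β]
    [IsStrictOrderedRing β] {f : α → β} {s : Set α} (hf : StrictMonoOn f s) {c : β} (hc : c ≠ 0) :
    StrictMonoOn (fun x => c * f x) s ∨ StrictAntiOn (fun x => c * f x) s := by
  rcases hc.lt_or_gt with hneg | hpos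
  · exact .inr fun a ha b hb hab => mul_lt_mul_of_neg_left (hf ha hb hab) hneg
  · exact .inl fun a ha b hb hab => mul_lt_mul_of_pos_left (hf ha hb hab) hpos

namespace Real

lemma sinh_lt_mul_cosh {x : ℝ} (hx : 0 < x) : sinh x < x * cosh x := by
  obtain ⟨c, ⟨hc0, hcx⟩, hslope⟩ :=
    exists_hasDerivAt_eq_slope sinh cosh hx continuous_sinh.continuousOn
      fun y _ => hasDerivAt_sinh y
  rw [sinh_zero, sub_zero, sub_zero, eq_div_iff hx.ne'] at hslope
  rw [← hslope, mul_comm]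
  exact mul_lt_mul_of_pos_left (cosh_strictMonoOn hc0.le hx.le hcx) hx

lemma two_mul_cosh_sub_one_sub_mul_sinh_neg {T : ℝ} (hT : 0 < T) :
    2 * (cosh T - 1) - T * sinh T < 0 := by
  have hx : 0 < T / 2 := half_pos hT
  have hhalf : 2 * (cosh T - 1) - T * sinh T =
      4 * sinh (T / 2) * (sinh (T / 2) - T / 2 * cosh (T / 2)) := by
    conv_lhs => rw [← add_halves T, cosh_add, sinh_add]
    linear_combination 2 * cosh_sq_sub_sinh_sq (T / 2)
  rw [hhalf]
  exact mul_neg_of_pos_of_neg (by positivity [sinh_pos_iff.2 hx])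
    (sub_neg.2 (sinh_lt_mul_cosh hx))

lemma sinh_add_sinh_pos {a b : ℝ} (ha : 0 ≤ a) (hb : 0 ≤ b) (hab : 0 < a + b) :
    0 < sinh a + sinh b := by
  rcases ha.eq_or_lt with rfl | ha
  · simpa using hab
  · exact add_pos_of_pos_of_nonneg (sinh_pos_iff.2 ha) (sinh_nonneg_iff.2 hb)

lemma cosh_mul_sinh_sub_sinh_mul_cosh_sub_one (t T : ℝ) :
    cosh t * sinh T - sinh t * (cosh T - 1) = sinh t + sinh (T - t) := by
  rw [sinh_sub]; ring

lemma sinh_mul_sinh_sub_cosh_mul_cosh_sub_one (t T : ℝ) :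
    sinh t * sinh T - cosh t * (cosh T - 1) = cosh t - cosh (T - t) := by
  rw [cosh_sub]; ring

lemma strictMonoOn_cosh_sub_cosh_sub (T : ℝ) :
    StrictMonoOn (fun t => cosh t - cosh (T - t)) (Icc 0 T) := by
  intro s ⟨hs0, hsT⟩ t ⟨ht0, htT⟩ hst
  have hcosh : cosh s < cosh t := cosh_strictMonoOn hs0 ht0 hst
  have hcosh_sub : cosh (T - t) < cosh (T - s) :=
    cosh_strictMonoOn (sub_nonneg.2 htT) (sub_nonneg.2 hsT) (by linarith)
  dsimp only
  linarith

end Real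

/-- For `T > 0` and `t ∈ [0, T]`, `cosh t * sinh T - sinh t * (cosh T - 1) > 0`;
consequently, for `q̃ ≠ 0`, the optimal control
`u*(t) = q̃ (sinh t sinh T - cosh t (cosh T - 1)) / (2 (cosh T - 1) - T sinh T)`
is strictly monotone on `[0, T]`. -/
theorem optimal_control_strictly_monotone (T : ℝ) (hT : 0 < T) :
    (∀ t ∈ Set.Icc (0 : ℝ) T,
      Real.cosh t * Real.sinh T - Real.sinh t * (Real.cosh T - 1) > 0) ∧
    ∀ qtilde : ℝ, qtilde ≠ 0 →
      StrictMonoOn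
        (fun t => qtilde * (Real.sinh t * Real.sinh T - Real.cosh t * (Real.cosh T - 1)) /
          (2 * (Real.cosh T - 1) - T * Real.sinh T)) (Set.Icc 0 T) ∨
      StrictAntiOn
        (fun t => qtilde * (Real.sinh t * Real.sinh T - Real.cosh t * (Real.cosh T - 1)) /
          (2 * (Real.cosh T - 1) - T * Real.sinh T)) (Set.Icc 0 T) := by
  refine ⟨fun t ⟨ht0, htT⟩ => ?_, fun q hq => ?_⟩
  · rw [cosh_mul_sinh_sub_sinh_mul_cosh_sub_one]
    exact sinh_add_sinh_pos ht0 (sub_nonneg.2 htT) (by linarith)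
  · have hD := (two_mul_cosh_sub_one_sub_mul_sinh_neg hT).ne
    simp only [sinh_mul_sinh_sub_cosh_mul_cosh_sub_one, mul_div_right_comm q]
    exact (strictMonoOn_cosh_sub_cosh_sub T).const_mul_or_strictAntiOn (div_ne_zero hq hD)
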